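/- arXiv:math/0501138 — 4 statements merged into one kernel-verified Lean document; each statement's English description precedes it below -/
import Mathlib

section
/- Let H be a Hopf algebra, M an H-Hopf bimodule, and T_H(M) the tensor algebra. There exists a unique algebra map δ : T_H(M) → T_H(M) ⊗ T_H(M) with δ|_H = Δ_H and δ|_M = ρ_l ⊕ ρ_r, and a unique algebra map ε : T_H(M) → K with ε|_H = ε_H and ε|_M = 0; moreover (T_H(M), δ, ε) is a bialgebra. -/
open TensorProduct

variable (K : Type) [Field K]
/-- `sweedler f g (h₁ ⊗ h₂) (m ⊗ n) = f h₁ m ⊗ g h₂ n`; this implements the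
Sweedler-notation expression `∑ f_{h₁}(m) ⊗ g_{h₂}(n)`. -/
noncomputable def sweedler {H M N : Type} [Ring H] [HopfAlgebra K H]
    [AddCommGroup M] [Module K M] [AddCommGroup N] [Module K N]
    (f : H →ₗ[K] M →ₗ[K] M) (g : H →ₗ[K] N →ₗ[K] N) :
    (H ⊗[K] H) →ₗ[K] (M ⊗[K] N) →ₗ[K] (M ⊗[K] N) :=
  TensorProduct.lift (((TensorProduct.mapBilinear (RingHom.id K) M N M N) ∘ₗ f).compl₂ g)
/-- An `H`-Hopf bimodule structure on `M`: an `H`-bimodule which is an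
`H`-bicomodule such that both comodule structure maps are morphisms of
bimodules (the Hopf compatibility conditions written in Sweedler notation:
`ρ_l(h.m.h') = ∑ h₁m₋₁h'₁ ⊗ h₂.m₀.h'₂` and
`ρ_r(h.m.h') = ∑ h₁.m₀.h'₁ ⊗ h₂m₁h'₂`). -/
structure HopfBimodule (H M : Type) [Ring H] [HopfAlgebra K H]
    [AddCommGroup M] [Module K M] where
  actL : H →ₗ[K] M →ₗ[K] M
  actR : H →ₗ[K] M →ₗ[K] M
  coactL : M →ₗ[K] H ⊗[K] M
  coactR : M →ₗ[K] M ⊗[K] H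
  actL_one : ∀ m, actL 1 m = m
  actR_one : ∀ m, actR 1 m = m
  actL_mul : ∀ g h m, actL (g * h) m = actL g (actL h m)
  actR_mul : ∀ g h m, actR (g * h) m = actR h (actR g m)
  act_comm : ∀ g h m, actL g (actR h m) = actR h (actL g m)
  coactL_coassoc : TensorProduct.map (Coalgebra.comul (R := K)) LinearMap.id ∘ₗ coactL
      = (TensorProduct.assoc K H H M).symm.toLinearMap ∘ₗ
          TensorProduct.map LinearMap.id coactL ∘ₗ coactL
  coactL_counit : ∀ m,
    TensorProduct.lid K M
      (TensorProduct.map (Coalgebra.counit (R := K)) LinearMap.id (coactL m)) = m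
  coactR_coassoc : TensorProduct.map LinearMap.id (Coalgebra.comul (R := K)) ∘ₗ coactR
      = (TensorProduct.assoc K M H H).toLinearMap ∘ₗ
          TensorProduct.map coactR LinearMap.id ∘ₗ coactR
  coactR_counit : ∀ m,
    TensorProduct.rid K M
      (TensorProduct.map LinearMap.id (Coalgebra.counit (R := K)) (coactR m)) = m
  coact_comm : TensorProduct.map LinearMap.id coactR ∘ₗ coactL
      = (TensorProduct.assoc K H M H).toLinearMap ∘ₗ
          TensorProduct.map coactL LinearMap.id ∘ₗ coactR
  coactL_actL : ∀ h m, coactL (actL h m)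
      = sweedler K (LinearMap.mul K H) actL (Coalgebra.comul (R := K) h) (coactL m)
  coactL_actR : ∀ h m, coactL (actR h m)
      = sweedler K (LinearMap.mul K H).flip actR (Coalgebra.comul (R := K) h) (coactL m)
  coactR_actL : ∀ h m, coactR (actL h m)
      = sweedler K actL (LinearMap.mul K H) (Coalgebra.comul (R := K) h) (coactR m)
  coactR_actR : ∀ h m, coactR (actR h m)
      = sweedler K actR (LinearMap.mul K H).flip (Coalgebra.comul (R := K) h) (coactR m)
/-- `T` realizes the tensor algebra `T_H(M)` of the `H`-bimodule `M`: there
are structure maps `ιH : H →ₐ T` and `ιM : M →ₗ T` compatible with the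
bimodule structure, and `T` has the universal property of the tensor algebra:
algebra maps out of `T` correspond uniquely to pairs `(f, g)` of an algebra
map `f` on `H` and an `H`-bimodule map `g` on `M`. -/
structure TensorAlgebraOf (H M T : Type) [Ring H] [HopfAlgebra K H]
    [AddCommGroup M] [Module K M] [Ring T] [Algebra K T]
    (hb : HopfBimodule K H M) where
  ιH : H →ₐ[K] T
  ιM : M →ₗ[K] T
  ιM_actL : ∀ h m, ιM (hb.actL h m) = ιH h * ιM m
  ιM_actR : ∀ h m, ιM (hb.actR h m) = ιM m * ιH h
  lift : ∀ (A : Type) [Ring A] [Algebra K A] (f : H →ₐ[K] A) (g : M →ₗ[K] A),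
      (∀ h m, g (hb.actL h m) = f h * g m) →
      (∀ h m, g (hb.actR h m) = g m * f h) →
      ∃! F : T →ₐ[K] A, F.comp ιH = f ∧ F.toLinearMap ∘ₗ ιM = g


section Aux

variable {K : Type} [Field K] {H M T : Type} [Ring H] [HopfAlgebra K H]
    [AddCommGroup M] [Module K M] [Ring T] [Algebra K T]

theorem sweedler_tmul {X Y : Type} [AddCommGroup X] [Module K X] [AddCommGroup Y] [Module K Y]
    (f : H →ₗ[K] X →ₗ[K] X) (g : H →ₗ[K] Y →ₗ[K] Y) (a b : H) (x : X) (y : Y) :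
    sweedler K f g (a ⊗ₜ[K] b) (x ⊗ₜ[K] y) = f a x ⊗ₜ[K] g b y := by
  simp [sweedler]

theorem map_sweedler_left {X Y : Type} [AddCommGroup X] [Module K X] [AddCommGroup Y] [Module K Y]
    (f : H →ₗ[K] X →ₗ[K] X) (g : H →ₗ[K] Y →ₗ[K] Y)
    (A : X →ₗ[K] T) (B : Y →ₗ[K] T) (e : H →ₐ[K] T)
    (hA : ∀ h x, A (f h x) = e h * A x) (hB : ∀ h y, B (g h y) = e h * B y)
    (u : H ⊗[K] H) (x : X ⊗[K] Y) :
    TensorProduct.map A B (sweedler K f g u x)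
      = TensorProduct.map e.toLinearMap e.toLinearMap u * TensorProduct.map A B x := by
  induction u using TensorProduct.induction_on with
  | zero => simp
  | tmul a b =>
    induction x using TensorProduct.induction_on with
    | zero => simp
    | tmul x y =>
      simp [sweedler_tmul, hA, hB, Algebra.TensorProduct.tmul_mul_tmul]
    | add x y hx hy => simp only [map_add, hx, hy, mul_add]
  | add u v hu hv => simp only [map_add, LinearMap.add_apply, hu, hv, add_mul]

theorem map_sweedler_right {X Y : Type} [AddCommGroup X] [Module K X] [AddCommGroup Y] [Module K Y]
    (f : H →ₗ[K] X →ₗ[K] X) (g : H →ₗ[K] Y →ₗ[K] Y)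
    (A : X →ₗ[K] T) (B : Y →ₗ[K] T) (e : H →ₐ[K] T)
    (hA : ∀ h x, A (f h x) = A x * e h) (hB : ∀ h y, B (g h y) = B y * e h)
    (u : H ⊗[K] H) (x : X ⊗[K] Y) :
    TensorProduct.map A B (sweedler K f g u x)
      = TensorProduct.map A B x * TensorProduct.map e.toLinearMap e.toLinearMap u := by
  induction u using TensorProduct.induction_on with
  | zero => simp
  | tmul a b =>
    induction x using TensorProduct.induction_on with
    | zero => simp
    | tmul x y =>
      simp [sweedler_tmul, hA, hB, Algebra.TensorProduct.tmul_mul_tmul]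
    | add x y hx hy => simp only [map_add, hx, hy, add_mul]
  | add u v hu hv => simp only [map_add, LinearMap.add_apply, hu, hv, mul_add]

theorem map_map_apply {A B C D E F : Type} [AddCommGroup A] [Module K A] [AddCommGroup B]
    [Module K B] [AddCommGroup C] [Module K C] [AddCommGroup D] [Module K D]
    [AddCommGroup E] [Module K E] [AddCommGroup F] [Module K F]
    (f : B →ₗ[K] C) (f' : A →ₗ[K] B) (g : E →ₗ[K] F) (g' : D →ₗ[K] E) (x : A ⊗[K] D) :
    TensorProduct.map f g (TensorProduct.map f' g' x)
      = TensorProduct.map (f ∘ₗ f') (g ∘ₗ g') x :=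
  (LinearMap.congr_fun (TensorProduct.map_comp f g f' g') x).symm

theorem ta_ext {hb : HopfBimodule K H M} (ta : TensorAlgebraOf K H M T hb)
    {A : Type} [Ring A] [Algebra K A] (F G : T →ₐ[K] A)
    (h1 : ∀ h, F (ta.ιH h) = G (ta.ιH h)) (h2 : ∀ m, F (ta.ιM m) = G (ta.ιM m)) : F = G := by
  obtain ⟨F', -, uniq⟩ := ta.lift A (F.comp ta.ιH) (F.toLinearMap ∘ₗ ta.ιM)
    (fun h m => by simp [ta.ιM_actL, map_mul])
    (fun h m => by simp [ta.ιM_actR, map_mul])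
  have e1 : F = F' := uniq F ⟨rfl, rfl⟩
  have e2 : G = F' := uniq G ⟨AlgHom.ext fun h => (h1 h).symm, LinearMap.ext fun m => (h2 m).symm⟩
  rw [e1, e2]

end Aux

set_option maxHeartbeats 2000000 in
/-- Let `(H, M)` be a couple and `T = T_H(M)` the tensor
algebra.  There is a unique algebra map `δ : T → T ⊗ T` with `δ|_H = Δ_H` and
`δ|_M = ρ_l ⊕ ρ_r`, and a unique algebra map `ε : T → K` with `ε|_H = ε_H`
and `ε|_M = 0`; moreover `(T, δ, ε)` is a bialgebra (δ is coassociative and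
ε is a counit for it). -/
theorem tensor_bialgebra (H M T : Type) [Ring H] [HopfAlgebra K H]
    [AddCommGroup M] [Module K M] [Ring T] [Algebra K T]
    (hb : HopfBimodule K H M) (ta : TensorAlgebraOf K H M T hb) :
    (∃! δ : T →ₐ[K] T ⊗[K] T,
       (∀ h, δ (ta.ιH h) = TensorProduct.map ta.ιH.toLinearMap ta.ιH.toLinearMap
          (Coalgebra.comul (R := K) h)) ∧
       (∀ m, δ (ta.ιM m) = TensorProduct.map ta.ιH.toLinearMap ta.ιM (hb.coactL m)
          + TensorProduct.map ta.ιM ta.ιH.toLinearMap (hb.coactR m))) ∧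
    (∃! ε : T →ₐ[K] K,
       (∀ h, ε (ta.ιH h) = Coalgebra.counit (R := K) h) ∧ (∀ m, ε (ta.ιM m) = 0)) ∧
    (∀ (δ : T →ₐ[K] T ⊗[K] T) (ε : T →ₐ[K] K),
       (∀ h, δ (ta.ιH h) = TensorProduct.map ta.ιH.toLinearMap ta.ιH.toLinearMap
          (Coalgebra.comul (R := K) h)) →
       (∀ m, δ (ta.ιM m) = TensorProduct.map ta.ιH.toLinearMap ta.ιM (hb.coactL m)
          + TensorProduct.map ta.ιM ta.ιH.toLinearMap (hb.coactR m)) →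
       (∀ h, ε (ta.ιH h) = Coalgebra.counit (R := K) h) → (∀ m, ε (ta.ιM m) = 0) →
       (TensorProduct.map δ.toLinearMap LinearMap.id ∘ₗ δ.toLinearMap
          = (TensorProduct.assoc K T T T).symm.toLinearMap ∘ₗ
              TensorProduct.map LinearMap.id δ.toLinearMap ∘ₗ δ.toLinearMap) ∧
       (∀ x : T, TensorProduct.lid K T
          (TensorProduct.map ε.toLinearMap LinearMap.id (δ x)) = x) ∧
       (∀ x : T, TensorProduct.rid K T
          (TensorProduct.map LinearMap.id ε.toLinearMap (δ x)) = x)) := by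
    classical
  have muL : ∀ a x : H, ta.ιH.toLinearMap ((LinearMap.mul K H) a x) = ta.ιH a * ta.ιH.toLinearMap x :=
    fun a x => by simp [LinearMap.mul_apply']
  have muR : ∀ a x : H, ta.ιH.toLinearMap ((LinearMap.mul K H).flip a x)
      = ta.ιH.toLinearMap x * ta.ιH a := fun a x => by simp [LinearMap.mul_apply']
  refine ⟨?_, ?_, ?_⟩
  · -- existence and uniqueness of δ
    set fδ : H →ₐ[K] T ⊗[K] T :=
      (Algebra.TensorProduct.map ta.ιH ta.ιH).comp (Bialgebra.comulAlgHom K H) with hfδdef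
    set gδ : M →ₗ[K] T ⊗[K] T :=
      TensorProduct.map ta.ιH.toLinearMap ta.ιM ∘ₗ hb.coactL
        + TensorProduct.map ta.ιM ta.ιH.toLinearMap ∘ₗ hb.coactR with hgδdef
    have hfδ' : ∀ h, fδ h = TensorProduct.map ta.ιH.toLinearMap ta.ιH.toLinearMap
        (Coalgebra.comul (R := K) h) := fun h => rfl
    have hgδ' : ∀ m, gδ m = TensorProduct.map ta.ιH.toLinearMap ta.ιM (hb.coactL m)
        + TensorProduct.map ta.ιM ta.ιH.toLinearMap (hb.coactR m) := fun m => rfl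
    have hL : ∀ h m, gδ (hb.actL h m) = fδ h * gδ m := by
      intro h m
      rw [hgδ' (hb.actL h m), hb.coactL_actL, hb.coactR_actL,
        map_sweedler_left (LinearMap.mul K H) hb.actL ta.ιH.toLinearMap ta.ιM ta.ιH
          muL (fun a x => ta.ιM_actL a x),
        map_sweedler_left hb.actL (LinearMap.mul K H) ta.ιM ta.ιH.toLinearMap ta.ιH
          (fun a x => ta.ιM_actL a x) muL,
        hfδ' h, hgδ' m, mul_add]
    have hR : ∀ h m, gδ (hb.actR h m) = gδ m * fδ h := by
      intro h m
      rw [hgδ' (hb.actR h m), hb.coactL_actR, hb.coactR_actR,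
        map_sweedler_right (LinearMap.mul K H).flip hb.actR ta.ιH.toLinearMap ta.ιM ta.ιH
          muR (fun a x => ta.ιM_actR a x),
        map_sweedler_right hb.actR (LinearMap.mul K H).flip ta.ιM ta.ιH.toLinearMap ta.ιH
          (fun a x => ta.ιM_actR a x) muR,
        hfδ' h, hgδ' m, add_mul]
    obtain ⟨δ0, ⟨hδ0H, hδ0M⟩, uniq⟩ := ta.lift (T ⊗[K] T) fδ gδ hL hR
    refine ⟨δ0, ⟨fun h => ?_, fun m => ?_⟩, fun δ' ⟨p1, p2⟩ => ?_⟩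
    · rw [← hfδ' h, ← hδ0H]; rfl
    · rw [← hgδ' m, ← hδ0M]; rfl
    · exact uniq δ' ⟨AlgHom.ext fun h => (p1 h).trans (hfδ' h).symm,
        LinearMap.ext fun m => (p2 m).trans (hgδ' m).symm⟩
  · -- existence and uniqueness of ε
    obtain ⟨ε0, ⟨hε0H, hε0M⟩, uniq⟩ := ta.lift K (Bialgebra.counitAlgHom K H) (0 : M →ₗ[K] K)
      (fun h m => by simp) (fun h m => by simp)
    exact ⟨ε0, ⟨fun h => AlgHom.congr_fun hε0H h, fun m => LinearMap.congr_fun hε0M m⟩,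
      fun ε' ⟨p1, p2⟩ => uniq ε' ⟨AlgHom.ext p1, LinearMap.ext p2⟩⟩
  · -- the bialgebra axioms
    intro δ ε hδH hδM hεH hεM
    -- auxiliary pointwise computations
    have A1 : ∀ u : H ⊗[K] H, TensorProduct.map δ.toLinearMap LinearMap.id
        (TensorProduct.map ta.ιH.toLinearMap ta.ιH.toLinearMap u)
        = TensorProduct.map (TensorProduct.map ta.ιH.toLinearMap ta.ιH.toLinearMap)
            ta.ιH.toLinearMap
            (TensorProduct.map (Coalgebra.comul (R := K)) LinearMap.id u) := by
      intro u
      induction u using TensorProduct.induction_on with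
      | zero => simp
      | tmul a b => simp [hδH]
      | add x y hx hy => simp only [map_add, hx, hy]
    have B1 : ∀ u : H ⊗[K] H, TensorProduct.map LinearMap.id δ.toLinearMap
        (TensorProduct.map ta.ιH.toLinearMap ta.ιH.toLinearMap u)
        = TensorProduct.map ta.ιH.toLinearMap
            (TensorProduct.map ta.ιH.toLinearMap ta.ιH.toLinearMap)
            (TensorProduct.map LinearMap.id (Coalgebra.comul (R := K)) u) := by
      intro u
      induction u using TensorProduct.induction_on with
      | zero => simp
      | tmul a b => simp [hδH]
      | add x y hx hy => simp only [map_add, hx, hy]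
    have C1 : ∀ x : H ⊗[K] M, TensorProduct.map δ.toLinearMap LinearMap.id
        (TensorProduct.map ta.ιH.toLinearMap ta.ιM x)
        = TensorProduct.map (TensorProduct.map ta.ιH.toLinearMap ta.ιH.toLinearMap) ta.ιM
            (TensorProduct.map (Coalgebra.comul (R := K)) LinearMap.id x) := by
      intro x
      induction x using TensorProduct.induction_on with
      | zero => simp
      | tmul a m => simp [hδH]
      | add x y hx hy => simp only [map_add, hx, hy]
    have C2 : ∀ x : M ⊗[K] H, TensorProduct.map δ.toLinearMap LinearMap.id
        (TensorProduct.map ta.ιM ta.ιH.toLinearMap x)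
        = TensorProduct.map (TensorProduct.map ta.ιH.toLinearMap ta.ιM) ta.ιH.toLinearMap
            (TensorProduct.map hb.coactL LinearMap.id x)
          + TensorProduct.map (TensorProduct.map ta.ιM ta.ιH.toLinearMap) ta.ιH.toLinearMap
            (TensorProduct.map hb.coactR LinearMap.id x) := by
      intro x
      induction x using TensorProduct.induction_on with
      | zero => simp
      | tmul m b => simp [hδM, TensorProduct.add_tmul]
      | add x y hx hy =>
        simp only [map_add, hx, hy]; abel
    have C3 : ∀ x : H ⊗[K] M, TensorProduct.map LinearMap.id δ.toLinearMap
        (TensorProduct.map ta.ιH.toLinearMap ta.ιM x)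
        = TensorProduct.map ta.ιH.toLinearMap
            (TensorProduct.map ta.ιH.toLinearMap ta.ιM)
            (TensorProduct.map LinearMap.id hb.coactL x)
          + TensorProduct.map ta.ιH.toLinearMap
            (TensorProduct.map ta.ιM ta.ιH.toLinearMap)
            (TensorProduct.map LinearMap.id hb.coactR x) := by
      intro x
      induction x using TensorProduct.induction_on with
      | zero => simp
      | tmul a m => simp [hδM, TensorProduct.tmul_add]
      | add x y hx hy =>
        simp only [map_add, hx, hy]; abel
    have C4 : ∀ x : M ⊗[K] H, TensorProduct.map LinearMap.id δ.toLinearMap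
        (TensorProduct.map ta.ιM ta.ιH.toLinearMap x)
        = TensorProduct.map ta.ιM
            (TensorProduct.map ta.ιH.toLinearMap ta.ιH.toLinearMap)
            (TensorProduct.map LinearMap.id (Coalgebra.comul (R := K)) x) := by
      intro x
      induction x using TensorProduct.induction_on with
      | zero => simp
      | tmul m b => simp [hδH]
      | add x y hx hy => simp only [map_add, hx, hy]
    -- coassociativity: generator computations
    have genH : ∀ h, TensorProduct.assoc K T T T
        (TensorProduct.map δ.toLinearMap LinearMap.id (δ (ta.ιH h)))
        = TensorProduct.map LinearMap.id δ.toLinearMap (δ (ta.ιH h)) := by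
      intro h
      rw [hδH h, A1, B1, ← TensorProduct.map_map_assoc]
      rw [show TensorProduct.assoc K H H H
          (TensorProduct.map (Coalgebra.comul (R := K)) LinearMap.id
            (Coalgebra.comul (R := K) h))
          = TensorProduct.map LinearMap.id (Coalgebra.comul (R := K))
            (Coalgebra.comul (R := K) h) from Coalgebra.coassoc_apply h]
    have genM : ∀ m, TensorProduct.assoc K T T T
        (TensorProduct.map δ.toLinearMap LinearMap.id (δ (ta.ιM m)))
        = TensorProduct.map LinearMap.id δ.toLinearMap (δ (ta.ιM m)) := by
      intro m
      have e1 : TensorProduct.map (Coalgebra.comul (R := K)) LinearMap.id (hb.coactL m)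
          = (TensorProduct.assoc K H H M).symm
              (TensorProduct.map LinearMap.id hb.coactL (hb.coactL m)) := by
        simpa using LinearMap.congr_fun hb.coactL_coassoc m
      have e2 : TensorProduct.assoc K H M H
            (TensorProduct.map hb.coactL LinearMap.id (hb.coactR m))
          = TensorProduct.map LinearMap.id hb.coactR (hb.coactL m) := by
        simpa using (LinearMap.congr_fun hb.coact_comm m).symm
      have e3 : TensorProduct.assoc K M H H
            (TensorProduct.map hb.coactR LinearMap.id (hb.coactR m))
          = TensorProduct.map LinearMap.id (Coalgebra.comul (R := K)) (hb.coactR m) := by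
        simpa using (LinearMap.congr_fun hb.coactR_coassoc m).symm
      rw [hδM m]
      simp only [map_add]
      rw [C1, C2, C3, C4]
      simp only [map_add]
      rw [e1, TensorProduct.map_map_assoc_symm,
        LinearEquiv.apply_symm_apply, ← TensorProduct.map_map_assoc, e2,
        ← TensorProduct.map_map_assoc, e3]
      abel
    have keyδ : ((Algebra.TensorProduct.assoc K K K T T T).toAlgHom.comp
          ((Algebra.TensorProduct.map δ (AlgHom.id K T)).comp δ))
        = (Algebra.TensorProduct.map (AlgHom.id K T) δ).comp δ :=
      ta_ext ta _ _ (fun h => genH h) (fun m => genM m)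
    -- counit, left: generator computations
    have genεH : ∀ h, TensorProduct.lid K T
        (TensorProduct.map ε.toLinearMap LinearMap.id (δ (ta.ιH h))) = ta.ιH h := by
      intro h
      rw [hδH h]
      have D1 : ∀ u : H ⊗[K] H, TensorProduct.lid K T
          (TensorProduct.map ε.toLinearMap LinearMap.id
            (TensorProduct.map ta.ιH.toLinearMap ta.ιH.toLinearMap u))
          = ta.ιH (TensorProduct.lid K H
              (TensorProduct.map (Coalgebra.counit (R := K)) LinearMap.id u)) := by
        intro u
        induction u using TensorProduct.induction_on with
        | zero => simp
        | tmul a b => simp [hεH]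
        | add x y hx hy => simp only [map_add, hx, hy]
      rw [D1, show TensorProduct.map (Coalgebra.counit (R := K)) LinearMap.id
          (Coalgebra.comul (R := K) h) = (1 : K) ⊗ₜ[K] h from Coalgebra.rTensor_counit_comul h]
      simp
    have genεM : ∀ m, TensorProduct.lid K T
        (TensorProduct.map ε.toLinearMap LinearMap.id (δ (ta.ιM m))) = ta.ιM m := by
      intro m
      have D2 : ∀ x : H ⊗[K] M, TensorProduct.lid K T
          (TensorProduct.map ε.toLinearMap LinearMap.id
            (TensorProduct.map ta.ιH.toLinearMap ta.ιM x))
          = ta.ιM (TensorProduct.lid K M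
              (TensorProduct.map (Coalgebra.counit (R := K)) LinearMap.id x)) := by
        intro x
        induction x using TensorProduct.induction_on with
        | zero => simp
        | tmul a b => simp [hεH]
        | add x y hx hy => simp only [map_add, hx, hy]
      have D3 : ∀ x : M ⊗[K] H, TensorProduct.lid K T
          (TensorProduct.map ε.toLinearMap LinearMap.id
            (TensorProduct.map ta.ιM ta.ιH.toLinearMap x)) = 0 := by
        intro x
        induction x using TensorProduct.induction_on with
        | zero => simp
        | tmul a b => simp [hεM]
        | add x y hx hy => simp only [map_add, hx, hy]; simp
      rw [hδM m]
      simp only [map_add]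
      rw [D2, D3, hb.coactL_counit m, add_zero]
    have keyε : ((Algebra.TensorProduct.lid K T).toAlgHom.comp
          ((Algebra.TensorProduct.map ε (AlgHom.id K T)).comp δ)) = AlgHom.id K T :=
      ta_ext ta _ _ (fun h => genεH h) (fun m => genεM m)
    -- counit, right: generator computations
    have ridcoe : ∀ x : T ⊗[K] K,
        (Algebra.TensorProduct.rid K K T) x = TensorProduct.rid K T x := by
      intro x
      induction x using TensorProduct.induction_on with
      | zero => simp
      | tmul a r => simp [Algebra.TensorProduct.rid_tmul, TensorProduct.rid_tmul]
      | add x y hx hy => simp only [map_add, hx, hy]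
    have genηH : ∀ h, TensorProduct.rid K T
        (TensorProduct.map LinearMap.id ε.toLinearMap (δ (ta.ιH h))) = ta.ιH h := by
      intro h
      rw [hδH h]
      have D1 : ∀ u : H ⊗[K] H, TensorProduct.rid K T
          (TensorProduct.map LinearMap.id ε.toLinearMap
            (TensorProduct.map ta.ιH.toLinearMap ta.ιH.toLinearMap u))
          = ta.ιH (TensorProduct.rid K H
              (TensorProduct.map LinearMap.id (Coalgebra.counit (R := K)) u)) := by
        intro u
        induction u using TensorProduct.induction_on with
        | zero => simp
        | tmul a b => simp [hεH]
        | add x y hx hy => simp only [map_add, hx, hy]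
      rw [D1, show TensorProduct.map LinearMap.id (Coalgebra.counit (R := K))
          (Coalgebra.comul (R := K) h) = h ⊗ₜ[K] (1 : K) from Coalgebra.lTensor_counit_comul h]
      simp
    have genηM : ∀ m, TensorProduct.rid K T
        (TensorProduct.map LinearMap.id ε.toLinearMap (δ (ta.ιM m))) = ta.ιM m := by
      intro m
      have D2 : ∀ x : M ⊗[K] H, TensorProduct.rid K T
          (TensorProduct.map LinearMap.id ε.toLinearMap
            (TensorProduct.map ta.ιM ta.ιH.toLinearMap x))
          = ta.ιM (TensorProduct.rid K M
              (TensorProduct.map LinearMap.id (Coalgebra.counit (R := K)) x)) := by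
        intro x
        induction x using TensorProduct.induction_on with
        | zero => simp
        | tmul a b => simp [hεH]
        | add x y hx hy => simp only [map_add, hx, hy]
      have D3 : ∀ x : H ⊗[K] M, TensorProduct.rid K T
          (TensorProduct.map LinearMap.id ε.toLinearMap
            (TensorProduct.map ta.ιH.toLinearMap ta.ιM x)) = 0 := by
        intro x
        induction x using TensorProduct.induction_on with
        | zero => simp
        | tmul a b => simp [hεM]
        | add x y hx hy => simp only [map_add, hx, hy]; simp
      rw [hδM m]
      simp only [map_add]
      rw [D2, D3, hb.coactR_counit m, zero_add]
    have keyη : ((Algebra.TensorProduct.rid K K T).toAlgHom.comp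
          ((Algebra.TensorProduct.map (AlgHom.id K T) ε).comp δ)) = AlgHom.id K T :=
      ta_ext ta _ _
        (fun h => by
          show (Algebra.TensorProduct.rid K K T)
            ((Algebra.TensorProduct.map (AlgHom.id K T) ε) (δ (ta.ιH h))) = ta.ιH h
          rw [ridcoe]; exact genηH h)
        (fun m => by
          show (Algebra.TensorProduct.rid K K T)
            ((Algebra.TensorProduct.map (AlgHom.id K T) ε) (δ (ta.ιM m))) = ta.ιM m
          rw [ridcoe]; exact genηM m)
    refine ⟨?_, ?_, ?_⟩
    · apply LinearMap.ext; intro x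
      have hx : TensorProduct.assoc K T T T
          (TensorProduct.map δ.toLinearMap LinearMap.id (δ x))
          = TensorProduct.map LinearMap.id δ.toLinearMap (δ x) := AlgHom.congr_fun keyδ x
      simp only [LinearMap.comp_apply, AlgHom.toLinearMap_apply, LinearEquiv.coe_coe]
      rw [← hx, LinearEquiv.symm_apply_apply]
    · intro x
      exact AlgHom.congr_fun keyε x
    · intro x
      have hx := AlgHom.congr_fun keyη x
      exact (ridcoe _).symm.trans hx
end

section
/- Let H be a Hopf algebra and M an H-Hopf bimodule. The graded subalgebra S_H(M) of the cotensor coalgebra Cot_H(M) generated by H and M is a graded sub-Hopf algebra of Cot_H(M) (i.e. it is closed under comultiplication and the antipode). -/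
open TensorProduct Coalgebra

noncomputable section Conv

variable {K : Type} [Field K] {D C : Type} [AddCommGroup D] [Module K D] [Coalgebra K D]
  [Ring C] [Algebra K C]

/-- Convolution product on linear maps from a coalgebra to an algebra. -/
def myconv (f g : D →ₗ[K] C) : D →ₗ[K] C :=
  LinearMap.mul' K C ∘ₗ TensorProduct.map f g ∘ₗ Coalgebra.comul

/-- Convolution unit. -/
def myconvUnit : D →ₗ[K] C := Algebra.linearMap K C ∘ₗ Coalgebra.counit

lemma myconv_repr (f g : D →ₗ[K] C) {d : D} {ι : Type*} (r : Coalgebra.Repr K d ι) :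
    myconv f g d = ∑ i ∈ r.index, f (r.left i) * g (r.right i) := by
  simp only [myconv, LinearMap.coe_comp, Function.comp_apply, ← r.eq, map_sum,
    TensorProduct.map_tmul, LinearMap.mul'_apply]

lemma myconv_unit_right (f : D →ₗ[K] C) : myconv f myconvUnit = f := by
  ext d
  obtain r := Coalgebra.Repr.arbitrary K d
  rw [myconv_repr f _ r]
  have h1 := congrArg (TensorProduct.rid K D) (Coalgebra.sum_tmul_counit_eq (R := K) r)
  simp only [map_sum, TensorProduct.rid_tmul, one_smul] at h1
  calc ∑ i ∈ r.index, f (r.left i) * myconvUnit (r.right i)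
      = ∑ i ∈ r.index, f (counit (R := K) (r.right i) • r.left i) := by
        refine Finset.sum_congr rfl fun i _ => ?_
        rw [map_smul, myconvUnit]
        simp only [LinearMap.coe_comp, Function.comp_apply, Algebra.linearMap_apply]
        rw [Algebra.smul_def]
        exact (Algebra.commutes _ _).symm
    _ = f d := by rw [← map_sum, h1]

lemma myconv_unit_left (f : D →ₗ[K] C) : myconv myconvUnit f = f := by
  ext d
  obtain r := Coalgebra.Repr.arbitrary K d
  rw [myconv_repr _ f r]
  have h1 := congrArg (TensorProduct.lid K D) (Coalgebra.sum_counit_tmul_eq (R := K) r)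
  simp only [map_sum, TensorProduct.lid_tmul, one_smul] at h1
  calc ∑ i ∈ r.index, myconvUnit (r.left i) * f (r.right i)
      = ∑ i ∈ r.index, f (counit (R := K) (r.left i) • r.right i) := by
        refine Finset.sum_congr rfl fun i _ => ?_
        rw [map_smul, myconvUnit]
        simp only [LinearMap.coe_comp, Function.comp_apply, Algebra.linearMap_apply]
        rw [Algebra.smul_def]
    _ = f d := by rw [← map_sum, h1]

lemma myconv_assoc (f g h : D →ₗ[K] C) :
    myconv (myconv f g) h = myconv f (myconv g h) := by
  ext d
  have e1 : ∀ x : D ⊗[K] D, TensorProduct.map (myconv f g) h x =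
      TensorProduct.map (LinearMap.mul' K C) LinearMap.id
        (TensorProduct.map (TensorProduct.map f g) h
          (TensorProduct.map (Coalgebra.comul (R := K)) LinearMap.id x)) := by
    intro x
    have : TensorProduct.map (myconv f g) h =
        (TensorProduct.map (LinearMap.mul' K C) LinearMap.id ∘ₗ
          TensorProduct.map (TensorProduct.map f g) h) ∘ₗ
          TensorProduct.map (Coalgebra.comul (R := K)) LinearMap.id := by
      rw [← TensorProduct.map_comp, ← TensorProduct.map_comp]
      congr 1
    exact DFunLike.congr_fun this x
  have e2 : ∀ x : D ⊗[K] D, TensorProduct.map f (myconv g h) x =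
      TensorProduct.map LinearMap.id (LinearMap.mul' K C)
        (TensorProduct.map f (TensorProduct.map g h)
          (TensorProduct.map LinearMap.id (Coalgebra.comul (R := K)) x)) := by
    intro x
    have : TensorProduct.map f (myconv g h) =
        (TensorProduct.map LinearMap.id (LinearMap.mul' K C) ∘ₗ
          TensorProduct.map f (TensorProduct.map g h)) ∘ₗ
          TensorProduct.map LinearMap.id (Coalgebra.comul (R := K)) := by
      rw [← TensorProduct.map_comp, ← TensorProduct.map_comp]
      congr 1
    exact DFunLike.congr_fun this x
  have hmul : ∀ y : (C ⊗[K] C) ⊗[K] C,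
      LinearMap.mul' K C (TensorProduct.map LinearMap.id (LinearMap.mul' K C)
        (TensorProduct.assoc K C C C y)) =
      LinearMap.mul' K C (TensorProduct.map (LinearMap.mul' K C) LinearMap.id y) := by
    intro y
    have : LinearMap.mul' K C ∘ₗ TensorProduct.map LinearMap.id (LinearMap.mul' K C)
        ∘ₗ (TensorProduct.assoc K C C C).toLinearMap =
        LinearMap.mul' K C ∘ₗ TensorProduct.map (LinearMap.mul' K C) LinearMap.id := by
      apply TensorProduct.ext_threefold
      intro x y z
      simp [mul_assoc]
    exact DFunLike.congr_fun this y
  have hco : TensorProduct.map LinearMap.id (Coalgebra.comul (R := K))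
      (Coalgebra.comul (R := K) d) =
      TensorProduct.assoc K D D D
        (TensorProduct.map (Coalgebra.comul (R := K)) LinearMap.id
          (Coalgebra.comul (R := K) d)) := by
    exact (Coalgebra.coassoc_apply (R := K) d).symm
  show LinearMap.mul' K C (TensorProduct.map (myconv f g) h (Coalgebra.comul (R := K) d)) =
    LinearMap.mul' K C (TensorProduct.map f (myconv g h) (Coalgebra.comul (R := K) d))
  rw [e1, e2, ← hmul, ← TensorProduct.map_map_assoc, ← hco]

end Conv

noncomputable section Hopf
variable {K : Type} [Field K] {C : Type} [Ring C] [HopfAlgebra K C]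

/-- A representation of `comul (a * b)` built from representations of `a` and `b`. -/
noncomputable def mulRepr {a b : C} {ι κ : Type*} (ra : Coalgebra.Repr K a ι) (rb : Coalgebra.Repr K b κ) :
    Coalgebra.Repr K (a * b) (ι × κ) where
  index := ra.index ×ˢ rb.index
  left := fun p => ra.left p.1 * rb.left p.2
  right := fun p => ra.right p.1 * rb.right p.2
  eq := by
    rw [Bialgebra.comul_mul, ← ra.eq, ← rb.eq, Finset.sum_mul_sum]
    rw [Finset.sum_product]
    exact Finset.sum_congr rfl fun i _ => Finset.sum_congr rfl fun j _ => by
      rw [Algebra.TensorProduct.tmul_mul_tmul]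

@[simp] lemma mulRepr_index {a b : C} {ι κ : Type*} (ra : Coalgebra.Repr K a ι) (rb : Coalgebra.Repr K b κ) :
    (mulRepr ra rb).index = ra.index ×ˢ rb.index := rfl
@[simp] lemma mulRepr_left {a b : C} {ι κ : Type*} (ra : Coalgebra.Repr K a ι) (rb : Coalgebra.Repr K b κ)
    (p : ι × κ) : (mulRepr ra rb).left p = ra.left p.1 * rb.left p.2 := rfl
@[simp] lemma mulRepr_right {a b : C} {ι κ : Type*} (ra : Coalgebra.Repr K a ι) (rb : Coalgebra.Repr K b κ)
    (p : ι × κ) : (mulRepr ra rb).right p = ra.right p.1 * rb.right p.2 := rfl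

lemma tp_counit_tmul (a b : C) :
    Coalgebra.counit (R := K) (a ⊗ₜ[K] b) =
      Coalgebra.counit (R := K) a * Coalgebra.counit (R := K) b := by
  simp [mul_comm]

/-- A representation of `comul (a ⊗ₜ b)` in the tensor product coalgebra. -/
noncomputable def tmulRepr {a b : C} {ι κ : Type*} (ra : Coalgebra.Repr K a ι) (rb : Coalgebra.Repr K b κ) :
    Coalgebra.Repr K (a ⊗ₜ[K] b : C ⊗[K] C) (ι × κ) where
  index := ra.index ×ˢ rb.index
  left := fun p => ra.left p.1 ⊗ₜ[K] rb.left p.2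
  right := fun p => ra.right p.1 ⊗ₜ[K] rb.right p.2
  eq := by
    rw [show Coalgebra.comul (R := K) (A := C ⊗[K] C) =
      TensorProduct.tensorTensorTensorComm K C C C C ∘ₗ
        TensorProduct.map Coalgebra.comul Coalgebra.comul from rfl]
    simp only [LinearMap.coe_comp, Function.comp_apply, TensorProduct.map_tmul]
    rw [← ra.eq, ← rb.eq, TensorProduct.sum_tmul]
    simp only [TensorProduct.tmul_sum, map_sum, TensorProduct.tensorTensorTensorComm_tmul]
    rw [Finset.sum_product]
    exact Finset.sum_congr rfl fun i _ => Finset.sum_congr rfl fun j _ => rfl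

@[simp] lemma tmulRepr_index {a b : C} {ι κ : Type*} (ra : Coalgebra.Repr K a ι) (rb : Coalgebra.Repr K b κ) :
    (tmulRepr ra rb).index = ra.index ×ˢ rb.index := rfl
@[simp] lemma tmulRepr_left {a b : C} {ι κ : Type*} (ra : Coalgebra.Repr K a ι) (rb : Coalgebra.Repr K b κ)
    (p : ι × κ) : (tmulRepr ra rb).left p = ra.left p.1 ⊗ₜ[K] rb.left p.2 := rfl
@[simp] lemma tmulRepr_right {a b : C} {ι κ : Type*} (ra : Coalgebra.Repr K a ι) (rb : Coalgebra.Repr K b κ)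
    (p : ι × κ) : (tmulRepr ra rb).right p = ra.right p.1 ⊗ₜ[K] rb.right p.2 := rfl

/-- `S ∘ m` as a linear map on `C ⊗ C`. -/
noncomputable def antipodeMulMap : (C ⊗[K] C) →ₗ[K] C :=
  HopfAlgebra.antipode K ∘ₗ LinearMap.mul' K C

/-- `m ∘ (S ⊗ S) ∘ τ` as a linear map on `C ⊗ C`. -/
noncomputable def mulAntipodeSwapMap : (C ⊗[K] C) →ₗ[K] C :=
  LinearMap.mul' K C ∘ₗ
    TensorProduct.map (HopfAlgebra.antipode (R := K)) (HopfAlgebra.antipode (R := K)) ∘ₗ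
    (TensorProduct.comm K C C).toLinearMap

lemma key1 : myconv (antipodeMulMap (K := K) (C := C)) (LinearMap.mul' K C) = myconvUnit := by
  apply TensorProduct.ext'
  intro a b
  obtain ra := Coalgebra.Repr.arbitrary K a
  obtain rb := Coalgebra.Repr.arbitrary K b
  rw [myconv_repr _ _ (tmulRepr ra rb)]
  have h := HopfAlgebra.sum_antipode_mul_eq_smul (R := K) (mulRepr ra rb)
  simp only [mulRepr_index, mulRepr_left, mulRepr_right] at h
  calc ∑ p ∈ (tmulRepr ra rb).index,
        antipodeMulMap ((tmulRepr ra rb).left p) * LinearMap.mul' K C ((tmulRepr ra rb).right p)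
      = ∑ p ∈ ra.index ×ˢ rb.index,
          HopfAlgebra.antipode (R := K) (ra.left p.1 * rb.left p.2) *
            (ra.right p.1 * rb.right p.2) := by
        refine Finset.sum_congr rfl fun p _ => ?_
        simp [antipodeMulMap, LinearMap.mul'_apply]
    _ = Coalgebra.counit (R := K) (a * b) • 1 := h
    _ = myconvUnit (a ⊗ₜ[K] b) := by
        rw [Bialgebra.counit_mul, myconvUnit]
        simp only [LinearMap.coe_comp, Function.comp_apply, Algebra.linearMap_apply,
          tp_counit_tmul, Algebra.algebraMap_eq_smul_one]

lemma key2 : myconv (LinearMap.mul' K C) (mulAntipodeSwapMap (K := K) (C := C)) = myconvUnit := by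
  apply TensorProduct.ext'
  intro a b
  obtain ra := Coalgebra.Repr.arbitrary K a
  obtain rb := Coalgebra.Repr.arbitrary K b
  rw [myconv_repr _ _ (tmulRepr ra rb)]
  have hb := HopfAlgebra.sum_mul_antipode_eq_smul (R := K) rb
  have ha := HopfAlgebra.sum_mul_antipode_eq_smul (R := K) ra
  calc ∑ p ∈ (tmulRepr ra rb).index,
        LinearMap.mul' K C ((tmulRepr ra rb).left p) *
          mulAntipodeSwapMap ((tmulRepr ra rb).right p)
      = ∑ i ∈ ra.index, ∑ j ∈ rb.index,
          ra.left i * ((rb.left j * HopfAlgebra.antipode (R := K) (rb.right j)) *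
            HopfAlgebra.antipode (R := K) (ra.right i)) := by
        rw [show (∑ p ∈ (tmulRepr ra rb).index,
            LinearMap.mul' K C ((tmulRepr ra rb).left p) *
              mulAntipodeSwapMap ((tmulRepr ra rb).right p)) =
          ∑ p ∈ ra.index ×ˢ rb.index,
            LinearMap.mul' K C (ra.left p.1 ⊗ₜ[K] rb.left p.2) *
              mulAntipodeSwapMap (ra.right p.1 ⊗ₜ[K] rb.right p.2) from rfl,
          Finset.sum_product]
        refine Finset.sum_congr rfl fun i _ => Finset.sum_congr rfl fun j _ => ?_
        simp only [mulAntipodeSwapMap, LinearMap.coe_comp,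
          Function.comp_apply, LinearEquiv.coe_coe, TensorProduct.comm_tmul,
          TensorProduct.map_tmul, LinearMap.mul'_apply]
        rw [mul_assoc, ← mul_assoc (rb.left j)]
    _ = ∑ i ∈ ra.index, Coalgebra.counit (R := K) b •
          (ra.left i * HopfAlgebra.antipode (R := K) (ra.right i)) := by
        refine Finset.sum_congr rfl fun i _ => ?_
        rw [← Finset.mul_sum, ← Finset.sum_mul, hb, smul_mul_assoc, one_mul, mul_smul_comm]
    _ = myconvUnit (a ⊗ₜ[K] b) := by
        rw [← Finset.smul_sum, ha, myconvUnit]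
        simp only [LinearMap.coe_comp, Function.comp_apply, Algebra.linearMap_apply,
          tp_counit_tmul, Algebra.algebraMap_eq_smul_one, smul_smul]
        rw [mul_comm]

theorem antipode_mul_rev (a b : C) :
    HopfAlgebra.antipode (R := K) (a * b) =
      HopfAlgebra.antipode (R := K) b * HopfAlgebra.antipode (R := K) a := by
  have hFG : antipodeMulMap (K := K) (C := C) = mulAntipodeSwapMap := by
    calc antipodeMulMap (K := K) (C := C)
        = myconv antipodeMulMap myconvUnit := (myconv_unit_right _).symm
      _ = myconv antipodeMulMap (myconv (LinearMap.mul' K C) mulAntipodeSwapMap) := by rw [key2]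
      _ = myconv (myconv antipodeMulMap (LinearMap.mul' K C)) mulAntipodeSwapMap :=
          (myconv_assoc _ _ _).symm
      _ = myconv myconvUnit mulAntipodeSwapMap := by rw [key1]
      _ = mulAntipodeSwapMap := myconv_unit_left _
  have := DFunLike.congr_fun hFG (a ⊗ₜ[K] b)
  simpa [antipodeMulMap, mulAntipodeSwapMap, LinearMap.mul'_apply] using this

lemma hopf_antipode_one : HopfAlgebra.antipode (R := K) (1 : C) = 1 := by
  have h := HopfAlgebra.sum_antipode_mul_eq_smul (R := K) (a := (1 : C))
    ⟨(Finset.univ : Finset Unit), fun _ => 1, fun _ => 1,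
      by simp [Algebra.TensorProduct.one_def]⟩
  simpa using h

lemma hopf_antipode_algebraMap (r : K) :
    HopfAlgebra.antipode (R := K) (algebraMap K C r) = algebraMap K C r := by
  rw [Algebra.algebraMap_eq_smul_one, map_smul, hopf_antipode_one]

end Hopf



open TensorProduct

variable (K : Type) [Field K]
/-- A grading `g` making the Hopf algebra `H` a graded Hopf algebra:
`H = ⊕ₙ g n`, `g i * g j ⊆ g (i+j)`, `1 ∈ g 0`, `S (g n) ⊆ g n`,
`Δ (g n) ⊆ ∑_{i+j=n} g i ⊗ g j` and `ε (g n) = 0` for `n > 0`. -/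
structure IsGradedHopf (H : Type) [Ring H] [HopfAlgebra K H]
    (g : ℕ → Submodule K H) : Prop where
  internal : DirectSum.IsInternal g
  one_mem : (1 : H) ∈ g 0
  mul_mem : ∀ ⦃i j : ℕ⦄ ⦃x y : H⦄, x ∈ g i → y ∈ g j → x * y ∈ g (i + j)
  antipode_mem : ∀ ⦃i : ℕ⦄ ⦃x : H⦄, x ∈ g i →
    HopfAlgebra.antipode (R := K) x ∈ g i
  comul_mem : ∀ ⦃i : ℕ⦄ ⦃x : H⦄, x ∈ g i → Coalgebra.comul (R := K) x ∈
    ⨆ p ∈ Finset.HasAntidiagonal.antidiagonal i,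
      Submodule.map₂ (TensorProduct.mk K H H) (g p.1) (g p.2)
  counit_eq_zero : ∀ ⦃i : ℕ⦄, 0 < i → ∀ ⦃x : H⦄, x ∈ g i →
    Coalgebra.counit (R := K) x = 0

/-- Let `C` be a graded Hopf algebra (e.g. the cotensor Hopf
algebra `Cot_H(M)` of a couple `(H, M)`, with `gC 0 = H` and `gC 1 = M`).
The subalgebra `S` generated by the degree `0` and degree `1` components
(the quantum symmetric algebra `S_H(M)`) is a graded sub-Hopf algebra: it is
closed under the comultiplication (`Δ(S) ⊆ S ⊗ S`), under the antipode, and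
is a graded subspace. -/
theorem quantumSymmetric_is_subHopf (C : Type) [Ring C] [HopfAlgebra K C]
    (gC : ℕ → Submodule K C) (hC : IsGradedHopf K C gC) :
    ∀ S : Subalgebra K C,
      S = Algebra.adjoin K ((gC 0 ⊔ gC 1 : Submodule K C) : Set C) →
      (∀ x ∈ S, Coalgebra.comul (R := K) x ∈
        Submodule.map₂ (TensorProduct.mk K C C) (Subalgebra.toSubmodule S)
          (Subalgebra.toSubmodule S)) ∧
      (∀ x ∈ S, HopfAlgebra.antipode (R := K) x ∈ S) ∧
      (Subalgebra.toSubmodule S = ⨆ n, Subalgebra.toSubmodule S ⊓ gC n) := by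
  intro S hS
  have h01 : ∀ n : ℕ, n ≤ 1 → gC n ≤ Subalgebra.toSubmodule S := by
    intro n hn x hx
    have hx' : x ∈ (gC 0 ⊔ gC 1 : Submodule K C) := by
      interval_cases n
      · exact Submodule.mem_sup_left hx
      · exact Submodule.mem_sup_right hx
    show x ∈ S
    rw [hS]
    exact Algebra.subset_adjoin hx'
  refine ⟨?_, ?_, ?_⟩
  · -- closed under comultiplication
    set P := Submodule.map₂ (TensorProduct.mk K C C) (Subalgebra.toSubmodule S)
      (Subalgebra.toSubmodule S) with hP
    have hPmul : ∀ u ∈ P, ∀ v ∈ P, u * v ∈ P := by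
      have hle : P * P ≤ P := by
        rw [hP, Submodule.map₂_eq_span_image2, Submodule.span_mul_span]
        refine Submodule.span_le.2 ?_
        rintro z hz
        rw [Set.mem_mul] at hz
        obtain ⟨x, hx, y, hy, rfl⟩ := hz
        obtain ⟨a, ha, b, hb, rfl⟩ := hx
        obtain ⟨c, hc, d, hd, rfl⟩ := hy
        have : (TensorProduct.mk K C C a b) * (TensorProduct.mk K C C c d) =
            TensorProduct.mk K C C (a * c) (b * d) := by
          simp only [TensorProduct.mk_apply, Algebra.TensorProduct.tmul_mul_tmul]
        rw [this]
        exact Submodule.subset_span ⟨a * c, S.mul_mem ha hc, b * d, S.mul_mem hb hd, rfl⟩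
      intro u hu v hv
      exact hle (Submodule.mul_mem_mul hu hv)
    have hgensup : ∀ i : ℕ, i ≤ 1 →
        (⨆ p ∈ Finset.HasAntidiagonal.antidiagonal i,
          Submodule.map₂ (TensorProduct.mk K C C) (gC p.1) (gC p.2)) ≤ P := by
      intro i hi
      refine iSup₂_le fun p hp => ?_
      rw [Finset.HasAntidiagonal.mem_antidiagonal] at hp
      exact Submodule.map₂_le_map₂ (h01 p.1 (by omega)) (h01 p.2 (by omega))
    intro x hx
    rw [hS] at hx
    induction hx using Algebra.adjoin_induction with
    | mem y hy =>
      obtain ⟨a, ha, b, hb, rfl⟩ := Submodule.mem_sup.1 hy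
      rw [map_add]
      exact P.add_mem (hgensup 0 (by omega) (hC.comul_mem ha))
        (hgensup 1 (by omega) (hC.comul_mem hb))
    | algebraMap r =>
      have : Coalgebra.comul (R := K) ((algebraMap K C) r) = r • (1 : C) ⊗ₜ[K] (1 : C) := by
        rw [Algebra.algebraMap_eq_smul_one, map_smul, Bialgebra.comul_one,
          Algebra.TensorProduct.one_def]
      rw [this]
      exact P.smul_mem r (Submodule.apply_mem_map₂ _ S.one_mem S.one_mem)
    | add y z hy hz ihy ihz => rw [map_add]; exact P.add_mem ihy ihz
    | mul y z hy hz ihy ihz => rw [Bialgebra.comul_mul]; exact hPmul _ ihy _ ihz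
  · -- closed under the antipode
    intro x hx
    rw [hS] at hx
    induction hx using Algebra.adjoin_induction with
    | mem y hy =>
      obtain ⟨a, ha, b, hb, rfl⟩ := Submodule.mem_sup.1 hy
      rw [map_add]
      exact S.add_mem (h01 0 (by omega) (hC.antipode_mem ha))
        (h01 1 (by omega) (hC.antipode_mem hb))
    | algebraMap r => rw [hopf_antipode_algebraMap]; exact S.algebraMap_mem r
    | add y z hy hz ihy ihz => rw [map_add]; exact S.add_mem ihy ihz
    | mul y z hy hz ihy ihz => rw [antipode_mul_rev]; exact S.mul_mem ihz ihy
  · -- graded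
    refine le_antisymm ?_ (iSup_le fun n => inf_le_left)
    set Q : Submodule K C := ⨆ n, Subalgebra.toSubmodule S ⊓ gC n with hQ
    have hone : (1 : C) ∈ Q :=
      Submodule.mem_iSup_of_mem 0 ⟨S.one_mem, hC.one_mem⟩
    have hmul : ∀ x ∈ Q, ∀ y ∈ Q, x * y ∈ Q := by
      intro x hx
      refine Submodule.iSup_induction (motive := fun x => ∀ y ∈ Q, x * y ∈ Q) _ hx ?_ ?_ ?_
      · intro i x hxi y hy
        refine Submodule.iSup_induction (motive := fun y => x * y ∈ Q) _ hy ?_ ?_ ?_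
        · intro j y hyj
          exact Submodule.mem_iSup_of_mem (i + j)
            ⟨S.mul_mem hxi.1 hyj.1, hC.mul_mem hxi.2 hyj.2⟩
        · show x * 0 ∈ Q
          rw [mul_zero]; exact Q.zero_mem
        · intro y z hy hz
          show x * (y + z) ∈ Q
          rw [mul_add]; exact Q.add_mem hy hz
      · intro y hy
        show (0 : C) * y ∈ Q
        rw [zero_mul]; exact Q.zero_mem
      · intro u v hu hv y hy
        show (u + v) * y ∈ Q
        rw [add_mul]; exact Q.add_mem (hu y hy) (hv y hy)
    let T : Subalgebra K C :=
      { carrier := (Q : Set C)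
        one_mem' := hone
        mul_mem' := fun {x y} hx hy => hmul x hx y hy
        zero_mem' := Q.zero_mem
        add_mem' := fun {x y} hx hy => Q.add_mem hx hy
        algebraMap_mem' := fun r => by
          rw [Algebra.algebraMap_eq_smul_one]
          exact Q.smul_mem r hone }
    have hle : S ≤ T := by
      rw [hS]
      refine Algebra.adjoin_le ?_
      intro x hx
      obtain ⟨a, ha, b, hb, rfl⟩ := Submodule.mem_sup.1 hx
      have haS : a ∈ S := h01 0 (by omega) ha
      have hbS : b ∈ S := h01 1 (by omega) hb
      show a + b ∈ Q
      exact Q.add_mem (Submodule.mem_iSup_of_mem 0 ⟨haS, ha⟩)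
        (Submodule.mem_iSup_of_mem 1 ⟨hbS, hb⟩)
    intro x hx
    exact hle hx
end

section
/- Let A be an algebra, M an A-bimodule, and C = ⊕_{n≥0} C_n a graded coalgebra. Suppose φ_0 : A × C_0 → K is an algebra-coalgebra pairing and φ_1 : M × C_1 → K is bilinear with φ_1(a·m·a', c) = ∑ φ_0(a, c_{-1}) φ_1(m, c_0) φ_0(a', c_1) for a, a' ∈ A, m ∈ M, c ∈ C_1. Then there exists a unique graded algebra-coalgebra pairing φ : T_A(M) × C → K extending φ_0 and φ_1. -/
open TensorProduct

variable (K : Type) [Field K]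
/-- A grading making an algebra a graded algebra. -/
structure IsGradedAlgebra (A : Type) [Ring A] [Algebra K A]
    (g : ℕ → Submodule K A) : Prop where
  internal : DirectSum.IsInternal g
  one_mem : (1 : A) ∈ g 0
  mul_mem : ∀ ⦃i j : ℕ⦄ ⦃x y : A⦄, x ∈ g i → y ∈ g j → x * y ∈ g (i + j)
/-- A grading making a coalgebra a graded coalgebra. -/
structure IsGradedCoalgebra (C : Type) [AddCommGroup C] [Module K C] [Coalgebra K C]
    (g : ℕ → Submodule K C) : Prop where
  internal : DirectSum.IsInternal g
  comul_mem : ∀ ⦃i : ℕ⦄ ⦃x : C⦄, x ∈ g i → Coalgebra.comul (R := K) x ∈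
    ⨆ p ∈ Finset.HasAntidiagonal.antidiagonal i,
      Submodule.map₂ (TensorProduct.mk K C C) (g p.1) (g p.2)
  counit_eq_zero : ∀ ⦃i : ℕ⦄, 0 < i → ∀ ⦃x : C⦄, x ∈ g i →
    Coalgebra.counit (R := K) x = 0

noncomputable section
namespace Stmt14
open Coalgebra

variable {K C : Type} [Field K] [AddCommGroup C] [Module K C] [Coalgebra K C]

instance : One (C →ₗ[K] K) := ⟨(counit : C →ₗ[K] K)⟩
instance : Mul (C →ₗ[K] K) :=
  ⟨fun f g => (TensorProduct.dualDistrib K C C (f ⊗ₜ g)) ∘ₗ (comul : C →ₗ[K] C ⊗[K] C)⟩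

lemma one_def : (1 : C →ₗ[K] K) = (counit : C →ₗ[K] K) := rfl

lemma mul_apply' (f g : C →ₗ[K] K) (c : C) :
    (f * g) c = TensorProduct.dualDistrib K C C (f ⊗ₜ g) (comul c) := rfl

lemma mul_repr (f g : C →ₗ[K] K) {c : C} {ι : Type*} (r : Coalgebra.Repr K c ι) :
    (f * g) c = ∑ i ∈ r.index, f (r.left i) * g (r.right i) := by
  rw [mul_apply', ← r.eq, map_sum]
  simp [TensorProduct.dualDistrib_apply]

lemma sum_counit_mul (u : C →ₗ[K] K) {c : C} {ι : Type*} (r : Coalgebra.Repr K c ι) :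
    ∑ i ∈ r.index, counit (R := K) (r.left i) * u (r.right i) = u c := by
  have h := Coalgebra.sum_counit_tmul_eq (R := K) r
  have h2 := congrArg (TensorProduct.lid K C) h
  rw [map_sum] at h2
  simp only [TensorProduct.lid_tmul, one_smul] at h2
  calc ∑ i ∈ r.index, counit (R := K) (r.left i) * u (r.right i)
      = u (∑ i ∈ r.index, counit (R := K) (r.left i) • r.right i) := by
        rw [map_sum]; simp [smul_eq_mul]
    _ = u c := by rw [h2]

lemma sum_mul_counit (u : C →ₗ[K] K) {c : C} {ι : Type*} (r : Coalgebra.Repr K c ι) :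
    ∑ i ∈ r.index, u (r.left i) * counit (R := K) (r.right i) = u c := by
  have h := Coalgebra.sum_tmul_counit_eq (R := K) r
  have h2 := congrArg (TensorProduct.rid K C) h
  rw [map_sum] at h2
  simp only [TensorProduct.rid_tmul, one_smul] at h2
  calc ∑ i ∈ r.index, u (r.left i) * counit (R := K) (r.right i)
      = u (∑ i ∈ r.index, counit (R := K) (r.right i) • r.left i) := by
        rw [map_sum]; simp [smul_eq_mul, mul_comm]
    _ = u c := by rw [h2]

instance : Ring (C →ₗ[K] K) :=
  { (inferInstance : AddCommGroup (C →ₗ[K] K)),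
    (inferInstance : One (C →ₗ[K] K)), (inferInstance : Mul (C →ₗ[K] K)) with
    left_distrib := fun f g h => by
      ext c; simp [mul_apply', TensorProduct.tmul_add]
    right_distrib := fun f g h => by
      ext c; simp [mul_apply', TensorProduct.add_tmul]
    zero_mul := fun f => by ext c; simp [mul_apply']
    mul_zero := fun f => by ext c; simp [mul_apply']
    one_mul := fun f => by
      ext c
      rw [show (1 * f) c = _ from mul_repr 1 f (Coalgebra.Repr.arbitrary K c)]
      exact sum_counit_mul f _
    mul_one := fun f => by
      ext c
      rw [show (f * 1) c = _ from mul_repr f 1 (Coalgebra.Repr.arbitrary K c)]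
      exact sum_mul_counit f _
    mul_assoc := fun f g h => by
      ext c
      set r := Coalgebra.Repr.arbitrary K c
      have key := Coalgebra.sum_tmul_tmul_eq r
        (fun i => Coalgebra.Repr.arbitrary K (r.left i))
        (fun i => Coalgebra.Repr.arbitrary K (r.right i))
      have key2 := congrArg
        (TensorProduct.dualDistrib K C (C ⊗[K] C)
          (f ⊗ₜ TensorProduct.dualDistrib K C C (g ⊗ₜ h))) key
      rw [map_sum, map_sum] at key2
      simp only [map_sum, TensorProduct.dualDistrib_apply, Finset.mul_sum] at key2
      rw [show (f * g * h) c = _ from mul_repr (f * g) h r,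
        show (f * (g * h)) c = _ from mul_repr f (g * h) r]
      calc ∑ i ∈ r.index, (f * g) (r.left i) * h (r.right i)
          = ∑ i ∈ r.index, ∑ j ∈ (Coalgebra.Repr.arbitrary K (r.left i)).index,
              f ((Coalgebra.Repr.arbitrary K (r.left i)).left j) *
              (g ((Coalgebra.Repr.arbitrary K (r.left i)).right j) * h (r.right i)) := by
            refine Finset.sum_congr rfl fun i _ => ?_
            rw [mul_repr f g (Coalgebra.Repr.arbitrary K (r.left i)), Finset.sum_mul]
            simp [mul_assoc]
        _ = ∑ i ∈ r.index, ∑ j ∈ (Coalgebra.Repr.arbitrary K (r.right i)).index,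
              f (r.left i) * (g ((Coalgebra.Repr.arbitrary K (r.right i)).left j) *
              h ((Coalgebra.Repr.arbitrary K (r.right i)).right j)) := key2
        _ = ∑ i ∈ r.index, f (r.left i) * (g * h) (r.right i) := by
            refine Finset.sum_congr rfl fun i _ => ?_
            rw [mul_repr g h (Coalgebra.Repr.arbitrary K (r.right i)), Finset.mul_sum] }

instance : Algebra K (C →ₗ[K] K) :=
  Algebra.ofModule
    (fun k f g => by
      ext c; rw [show ((k • f) * g) c = _ from mul_apply' _ _ c]
      rw [show (k • f) ⊗ₜ[K] g = k • (f ⊗ₜ[K] g) from TensorProduct.smul_tmul' k f g]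
      simp [mul_apply'])
    (fun k f g => by
      ext c; rw [show (f * (k • g)) c = _ from mul_apply' _ _ c]
      rw [show f ⊗ₜ[K] (k • g) = k • (f ⊗ₜ[K] g) from (TensorProduct.tmul_smul k f g)]
      simp [mul_apply'])

end Stmt14
end

open Stmt14

/-- **Lemma 3.3.** Let `A` be an algebra, `M` an `A`-bimodule
and `C = ⊕ₙ Cₙ` a graded coalgebra.  Given an algebra-coalgebra pairing
`φ₀ : A × C₀ → K` and a bilinear map `φ₁ : M × C₁ → K` satisfying
`φ₁(a.m.a', c) = ∑ φ₀(a, c₋₁) φ₁(m, c₀) φ₀(a', c₁)`, there exists a unique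
graded algebra-coalgebra pairing `φ : T_A(M) × C → K` extending `φ₀` and
`φ₁`; here the tensor algebra `T_A(M)` is presented by a graded algebra `T`
with structure maps `eA, eM` and the universal property of the tensor
algebra. -/
theorem tensorAlgebra_pairing
    (A M C T : Type) [Ring A] [Algebra K A]
    [AddCommGroup M] [Module K M]
    [AddCommGroup C] [Module K C] [Coalgebra K C]
    [Ring T] [Algebra K T]
    -- the `A`-bimodule structure on `M`
    (actL actR : A →ₗ[K] M →ₗ[K] M)
    (hL1 : ∀ m, actL 1 m = m) (hR1 : ∀ m, actR 1 m = m)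
    (hLmul : ∀ a b m, actL (a * b) m = actL a (actL b m))
    (hRmul : ∀ a b m, actR (a * b) m = actR b (actR a m))
    (hLR : ∀ a b m, actL a (actR b m) = actR b (actL a m))
    -- the grading of `C`, with projections onto the components
    (gC : ℕ → Submodule K C) (hC : IsGradedCoalgebra K C gC)
    (proj : ℕ → (C →ₗ[K] C))
    (hproj_mem : ∀ n x, proj n x ∈ gC n)
    (hproj_eq : ∀ n, ∀ x ∈ gC n, proj n x = x)
    (hproj_ne : ∀ m n, m ≠ n → ∀ x ∈ gC m, proj n x = 0)
    -- `T = T_A(M)`: a graded algebra with the universal property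
    (gT : ℕ → Submodule K T) (hT : IsGradedAlgebra K T gT)
    (eA : A →ₐ[K] T) (eM : M →ₗ[K] T)
    (heA : LinearMap.range eA.toLinearMap = gT 0)
    (heM : LinearMap.range eM = gT 1)
    (heA_inj : Function.Injective eA) (heM_inj : Function.Injective eM)
    (heL : ∀ a m, eM (actL a m) = eA a * eM m)
    (heR : ∀ a m, eM (actR a m) = eM m * eA a)
    (hfree : ∀ (A' : Type) [Ring A'] [Algebra K A'] (f : A →ₐ[K] A') (g : M →ₗ[K] A'),
      (∀ a m, g (actL a m) = f a * g m) →
      (∀ a m, g (actR a m) = g m * f a) →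
      ∃! F : T →ₐ[K] A', F.comp eA = f ∧ F.toLinearMap ∘ₗ eM = g)
    -- `φ₀` : an algebra-coalgebra pairing with `C₀`
    (φ0 : A →ₗ[K] C →ₗ[K] K)
    (hφ0_one : ∀ c ∈ gC 0, φ0 1 c = Coalgebra.counit (R := K) c)
    (hφ0_mul : ∀ a a' : A, ∀ c ∈ gC 0, φ0 (a * a') c
      = TensorProduct.dualDistrib K C C (φ0 a ⊗ₜ φ0 a') (Coalgebra.comul (R := K) c))
    -- `φ₁` : a bilinear pairing with `C₁` compatible with the bimodule structure
    (φ1 : M →ₗ[K] C →ₗ[K] K)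
    (hφ1 : ∀ (a a' : A) (m : M), ∀ c ∈ gC 1,
      φ1 (actL a (actR a' m)) c
        = TensorProduct.dualDistrib K C (C ⊗[K] C)
            (φ0 a ⊗ₜ TensorProduct.dualDistrib K C C (φ1 m ⊗ₜ φ0 a'))
            (TensorProduct.map (proj 0) (TensorProduct.map (proj 1) (proj 0))
              (TensorProduct.map LinearMap.id (Coalgebra.comul (R := K))
                (Coalgebra.comul (R := K) c)))) :
    ∃! φ : T →ₗ[K] C →ₗ[K] K,
      (∀ c : C, φ 1 c = Coalgebra.counit (R := K) c) ∧
      (∀ x y : T, ∀ c : C, φ (x * y) c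
        = TensorProduct.dualDistrib K C C (φ x ⊗ₜ φ y) (Coalgebra.comul (R := K) c)) ∧
      (∀ i j : ℕ, i ≠ j → ∀ x ∈ gT i, ∀ c ∈ gC j, φ x c = 0) ∧
      (∀ a : A, ∀ c ∈ gC 0, φ (eA a) c = φ0 a c) ∧
      (∀ m : M, ∀ c ∈ gC 1, φ (eM m) c = φ1 m c) := by
  classical
  -- extension principle from graded pieces of C
  have hCtop : (⨆ i, gC i) = ⊤ := hC.internal.submodule_iSup_eq_top
  have ext0 : ∀ (f g : C →ₗ[K] K), (∀ j, ∀ c ∈ gC j, f c = g c) → f = g := by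
    intro f g h
    ext c
    have hc : c ∈ ⨆ i, gC i := by rw [hCtop]; exact Submodule.mem_top
    have hle : (⨆ i, gC i) ≤ LinearMap.eqLocus f g :=
      iSup_le fun j x hx => LinearMap.mem_eqLocus.2 (h j x hx)
    exact LinearMap.mem_eqLocus.1 (hle hc)
  have εgr : ∀ j, j ≠ 0 → ∀ c ∈ gC j, Coalgebra.counit (R := K) c = 0 :=
    fun j hj c hc => hC.counit_eq_zero (Nat.pos_of_ne_zero hj) hc
  -- φ0 1 ∘ proj 0 = counit
  have φ01 : (φ0 1) ∘ₗ proj 0 = (Coalgebra.counit : C →ₗ[K] K) := by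
    apply ext0
    intro j c hc
    rcases eq_or_ne j 0 with rfl | hj
    · simp only [LinearMap.comp_apply, hproj_eq 0 c hc]
      exact hφ0_one c hc
    · simp only [LinearMap.comp_apply, hproj_ne j 0 hj c hc, map_zero]
      exact (εgr j hj c hc).symm
  -- the submodules of functionals supported in degree n
  let B : ℕ → Submodule K (C →ₗ[K] K) := fun n =>
    { carrier := {f | ∀ j, j ≠ n → ∀ c ∈ gC j, f c = 0}
      add_mem' := fun hf hg j hj c hc => by
        simp only [LinearMap.add_apply, hf j hj c hc, hg j hj c hc, add_zero]
      zero_mem' := fun j hj c hc => rfl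
      smul_mem' := fun k f hf j hj c hc => by
        simp only [LinearMap.smul_apply, hf j hj c hc, smul_zero] }
  have hone_B : (1 : C →ₗ[K] K) ∈ B 0 := fun j hj c hc => εgr j hj c hc
  have hmulB : ∀ p q : ℕ, ∀ f ∈ B p, ∀ g ∈ B q, f * g ∈ B (p + q) := by
    intro p q f hf g hg j hj c hc
    rw [Stmt14.mul_apply']
    have h1 := hC.comul_mem hc
    have h2 : (⨆ pr ∈ Finset.HasAntidiagonal.antidiagonal j,
        Submodule.map₂ (TensorProduct.mk K C C) (gC pr.1) (gC pr.2))
        ≤ LinearMap.ker (TensorProduct.dualDistrib K C C (f ⊗ₜ g)) := by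
      refine iSup₂_le fun pr hpr => Submodule.map₂_le.2 fun m hm n hn => ?_
      rw [LinearMap.mem_ker]
      have hne : pr.1 ≠ p ∨ pr.2 ≠ q := by
        by_contra hcon
        push_neg at hcon
        exact hj (by rw [← Finset.HasAntidiagonal.mem_antidiagonal.1 hpr, hcon.1, hcon.2])
      rcases hne with h | h
      · simp [TensorProduct.dualDistrib_apply, hf pr.1 h m hm]
      · simp [TensorProduct.dualDistrib_apply, hg pr.2 h n hn]
    exact LinearMap.mem_ker.1 (h2 h1)
  -- agreement principle for functionals of comul c
  have hcomul_eq : ∀ (j : ℕ) (c : C), c ∈ gC j →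
      ∀ (F G : C ⊗[K] C →ₗ[K] K),
      (∀ pr : ℕ × ℕ, pr ∈ Finset.HasAntidiagonal.antidiagonal j → ∀ m ∈ gC pr.1, ∀ n ∈ gC pr.2,
        F (m ⊗ₜ n) = G (m ⊗ₜ n)) →
      F (Coalgebra.comul (R := K) c) = G (Coalgebra.comul (R := K) c) := by
    intro j c hc F G h
    have h1 := hC.comul_mem hc
    have h2 : (⨆ pr ∈ Finset.HasAntidiagonal.antidiagonal j,
        Submodule.map₂ (TensorProduct.mk K C C) (gC pr.1) (gC pr.2))
        ≤ LinearMap.eqLocus F G :=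
      iSup₂_le fun pr hpr => Submodule.map₂_le.2 fun m hm n hn =>
        LinearMap.mem_eqLocus.2 (h pr hpr m hm n hn)
    exact LinearMap.mem_eqLocus.1 (h2 h1)
  have ddcomp : ∀ (f g : C →ₗ[K] K) (p q : C →ₗ[K] C) (u : C ⊗[K] C),
      TensorProduct.dualDistrib K C C (f ⊗ₜ g) (TensorProduct.map p q u)
        = TensorProduct.dualDistrib K C C ((f ∘ₗ p) ⊗ₜ (g ∘ₗ q)) u := by
    intro f g p q u
    have : TensorProduct.dualDistrib K C C (f ⊗ₜ g) ∘ₗ TensorProduct.map p q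
        = TensorProduct.dualDistrib K C C ((f ∘ₗ p) ⊗ₜ (g ∘ₗ q)) := by
      apply TensorProduct.ext'
      intro m n
      simp
    exact congrFun (congrArg DFunLike.coe this) u
  -- the candidate algebra morphisms on generators
  set f0 : A →ₗ[K] (C →ₗ[K] K) := (LinearMap.lcomp K K (proj 0)).comp φ0 with hf0
  have f0_apply : ∀ (a : A) (c : C), f0 a c = φ0 a (proj 0 c) := fun a c => rfl
  set g1 : M →ₗ[K] (C →ₗ[K] K) := (LinearMap.lcomp K K (proj 1)).comp φ1 with hg1
  have g1_apply : ∀ (m : M) (c : C), g1 m c = φ1 m (proj 1 c) := fun m c => rfl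
  have f0_B : ∀ a, f0 a ∈ B 0 := by
    intro a j hj c hc
    rw [f0_apply, hproj_ne j 0 hj c hc, map_zero]
  have g1_B : ∀ m, g1 m ∈ B 1 := by
    intro m j hj c hc
    rw [g1_apply, hproj_ne j 1 hj c hc, map_zero]
  have f0_one : f0 1 = 1 := by
    apply LinearMap.ext
    intro c
    exact congrFun (congrArg DFunLike.coe φ01) c
  have f0_mul : ∀ a a', f0 (a * a') = f0 a * f0 a' := by
    intro a a'
    apply ext0
    intro j c hc
    rcases eq_or_ne j 0 with rfl | hj
    · rw [f0_apply, hproj_eq 0 c hc, hφ0_mul a a' c hc, Stmt14.mul_apply']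
      refine (hcomul_eq 0 c hc _ _ ?_).symm
      rintro ⟨pa, pb⟩ hpr m hm n hn
      obtain ⟨h1, h2⟩ := Nat.add_eq_zero.1 (Finset.HasAntidiagonal.mem_antidiagonal.1 hpr)
      subst h1; subst h2
      simp only [TensorProduct.dualDistrib_apply]
      rw [f0_apply, f0_apply, hproj_eq 0 m hm, hproj_eq 0 n hn]
    · rw [f0_apply, hproj_ne j 0 hj c hc, map_zero]
      exact (hmulB 0 0 _ (f0_B a) _ (f0_B a') j hj c hc).symm
  set F0 : A →ₐ[K] (C →ₗ[K] K) := AlgHom.ofLinearMap f0 f0_one f0_mul with hF0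
  -- compatibility with the bimodule structure
  have hcompatL : ∀ (a : A) (m : M), g1 (actL a m) = F0 a * g1 m := by
    intro a m
    apply ext0
    intro j c hc
    rcases eq_or_ne j 1 with rfl | hj
    · rw [g1_apply, hproj_eq 1 c hc]
      have := hφ1 a 1 m c hc
      rw [hR1 m] at this
      rw [this]
      set r := Coalgebra.Repr.arbitrary K c with hr
      rw [show (F0 a * g1 m) c = _ from mul_repr (F0 a) (g1 m) r, ← r.eq]
      rw [map_sum, map_sum, map_sum]
      refine Finset.sum_congr rfl fun i _ => ?_
      rw [TensorProduct.map_tmul, TensorProduct.map_tmul,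
        TensorProduct.dualDistrib_apply, LinearMap.id_apply]
      have hinner : TensorProduct.dualDistrib K C C (φ1 m ⊗ₜ φ0 1)
          (TensorProduct.map (proj 1) (proj 0) (Coalgebra.comul (R := K) (r.right i)))
          = g1 m (r.right i) := by
        rw [ddcomp]
        have : (φ1 m ∘ₗ proj 1) ⊗ₜ[K] ((φ0 1) ∘ₗ proj 0)
            = g1 m ⊗ₜ[K] (1 : C →ₗ[K] K) := by rw [φ01]; rfl
        rw [this, ← Stmt14.mul_apply', mul_one]
      rw [hinner]
      rfl
    · rw [g1_apply, hproj_ne j 1 hj c hc, map_zero]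
      exact (hmulB 0 1 _ (f0_B a) _ (g1_B m) j hj c hc).symm
  have hcompatR : ∀ (a' : A) (m : M), g1 (actR a' m) = g1 m * F0 a' := by
    intro a' m
    apply ext0
    intro j c hc
    rcases eq_or_ne j 1 with rfl | hj
    · rw [g1_apply, hproj_eq 1 c hc]
      have := hφ1 1 a' m c hc
      rw [hL1 (actR a' m)] at this
      rw [this]
      set r := Coalgebra.Repr.arbitrary K c with hr
      rw [← r.eq, map_sum, map_sum, map_sum]
      have step : ∀ i ∈ r.index,
          TensorProduct.dualDistrib K C (C ⊗[K] C)
            (φ0 1 ⊗ₜ TensorProduct.dualDistrib K C C (φ1 m ⊗ₜ φ0 a'))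
            (TensorProduct.map (proj 0) (TensorProduct.map (proj 1) (proj 0))
              (TensorProduct.map LinearMap.id (Coalgebra.comul (R := K))
                (r.left i ⊗ₜ r.right i)))
          = Coalgebra.counit (R := K) (r.left i) * (g1 m * F0 a') (r.right i) := by
        intro i _
        rw [TensorProduct.map_tmul, TensorProduct.map_tmul,
          TensorProduct.dualDistrib_apply, LinearMap.id_apply]
        congr 1
        · exact congrFun (congrArg DFunLike.coe φ01) (r.left i)
        · rw [ddcomp, Stmt14.mul_apply']
          rfl
      rw [Finset.sum_congr rfl step]
      exact sum_counit_mul ((g1 m) * (F0 a')) r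
    · rw [g1_apply, hproj_ne j 1 hj c hc, map_zero]
      exact (hmulB 1 0 _ (g1_B m) _ (f0_B a') j hj c hc).symm
  -- apply the universal property
  obtain ⟨F, ⟨hFA, hFM⟩, hFuniq⟩ := hfree (C →ₗ[K] K) F0 g1 hcompatL hcompatR
  have hFA' : ∀ a, F (eA a) = f0 a := fun a => AlgHom.congr_fun hFA a
  have hFM' : ∀ m, F (eM m) = g1 m := fun m => LinearMap.congr_fun hFM m
  -- grading of F
  let D : ℕ → Submodule K T := fun n => gT n ⊓ Submodule.comap F.toLinearMap (B n)
  have hD_one : (1 : T) ∈ D 0 := ⟨hT.one_mem, by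
    show F 1 ∈ B 0
    rw [map_one]
    exact hone_B⟩
  have hD_mul : ∀ m n x y, x ∈ D m → y ∈ D n → x * y ∈ D (m + n) := by
    intro m n x y hx hy
    refine ⟨hT.mul_mem hx.1 hy.1, ?_⟩
    show F (x * y) ∈ B (m + n)
    rw [map_mul]
    exact hmulB m n _ hx.2 _ hy.2
  have hSmul : ∀ x ∈ (⨆ n, D n), ∀ y ∈ (⨆ n, D n), x * y ∈ (⨆ n, D n) := by
    intro x hx
    refine Submodule.iSup_induction D (motive := fun x => ∀ y ∈ (⨆ n, D n), x * y ∈ (⨆ n, D n))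
      hx ?_ ?_ ?_
    · intro m x hxm y hy
      refine Submodule.iSup_induction D (motive := fun y => x * y ∈ (⨆ n, D n)) hy ?_ ?_ ?_
      · intro n y hyn
        exact Submodule.mem_iSup_of_mem (m + n) (hD_mul m n x y hxm hyn)
      · show x * 0 ∈ ⨆ n, D n
        rw [mul_zero]; exact zero_mem _
      · intro y z hy hz
        show x * (y + z) ∈ ⨆ n, D n
        rw [mul_add]; exact add_mem hy hz
    · intro y _
      show (0 : T) * y ∈ ⨆ n, D n
      rw [zero_mul]; exact zero_mem _
    · intro x z hx hz y hy
      show (x + z) * y ∈ ⨆ n, D n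
      rw [add_mul]; exact add_mem (hx y hy) (hz y hy)
  let S : Subalgebra K T := Submodule.toSubalgebra (⨆ n, D n) (Submodule.mem_iSup_of_mem 0 hD_one) (fun x y hx hy => hSmul x hx y hy)
  have heAS : ∀ a, eA a ∈ S := by
    intro a
    refine Submodule.mem_iSup_of_mem 0 (⟨?_, ?_⟩ : eA a ∈ D 0)
    · rw [← heA]; exact LinearMap.mem_range_self _ a
    · show F (eA a) ∈ B 0
      rw [hFA' a]; exact f0_B a
  have heMS : ∀ m, eM m ∈ S := by
    intro m
    refine Submodule.mem_iSup_of_mem 1 (⟨?_, ?_⟩ : eM m ∈ D 1)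
    · rw [← heM]; exact LinearMap.mem_range_self _ m
    · show F (eM m) ∈ B 1
      rw [hFM' m]; exact g1_B m
  -- T is generated by eA and eM, hence S = ⊤
  have hS_top : ∀ x : T, x ∈ S := by
    let f' : A →ₐ[K] S := AlgHom.codRestrict eA S heAS
    let g' : M →ₗ[K] S :=
      { toFun := fun m => ⟨eM m, heMS m⟩
        map_add' := fun m m' => by ext; simp
        map_smul' := fun k m => by ext; simp }
    have hL' : ∀ a m, g' (actL a m) = f' a * g' m := by
      intro a m; ext; exact heL a m
    have hR' : ∀ a m, g' (actR a m) = g' m * f' a := by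
      intro a m; ext; exact heR a m
    obtain ⟨G, ⟨hGA, hGM⟩, _⟩ := hfree S f' g' hL' hR'
    obtain ⟨E, _, hEuniq⟩ := hfree T eA eM heL heR
    have h1 : (S.val.comp G).comp eA = eA := by
      apply AlgHom.ext
      intro a
      show S.val (G (eA a)) = eA a
      rw [show G (eA a) = f' a from AlgHom.congr_fun hGA a]
      rfl
    have h2 : (S.val.comp G).toLinearMap ∘ₗ eM = eM := by
      apply LinearMap.ext
      intro m
      show S.val (G (eM m)) = eM m
      rw [show G (eM m) = g' m from LinearMap.congr_fun hGM m]
      rfl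
    have hid1 : (AlgHom.id K T).comp eA = eA := by
      apply AlgHom.ext; intro a; rfl
    have hid2 : (AlgHom.id K T).toLinearMap ∘ₗ eM = eM := by
      apply LinearMap.ext; intro m; rfl
    have heq : S.val.comp G = AlgHom.id K T :=
      (hEuniq _ ⟨h1, h2⟩).trans (hEuniq _ ⟨hid1, hid2⟩).symm
    intro x
    have : S.val (G x) = x := AlgHom.congr_fun heq x
    rw [← this]
    exact (G x).2
  -- extract graded components
  have hgrade : ∀ i, ∀ x ∈ gT i, F x ∈ B i := by
    intro i x hxi
    have hx : x ∈ ⨆ n, D n := hS_top x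
    rw [Submodule.mem_iSup_iff_exists_finsupp] at hx
    obtain ⟨a, ha, hsum⟩ := hx
    have hind := hT.internal.submodule_iSupIndep
    have hxai : x - a i ∈ gT i := sub_mem hxi (ha i).1
    have hx2 : x - a i ∈ ⨆ j, ⨆ _ : j ≠ i, gT j := by
      have hrw : x - a i = ∑ j ∈ a.support.erase i, a j := by
        by_cases hi : i ∈ a.support
        · have := Finset.sum_erase_add a.support a hi
          rw [Finsupp.sum] at hsum
          rw [← hsum, ← this]
          abel
        · have hz : a i = 0 := Finsupp.notMem_support_iff.1 hi
          rw [hz, sub_zero, ← hsum, Finsupp.sum, Finset.erase_eq_of_notMem hi]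
      rw [hrw]
      refine Submodule.sum_mem _ fun j hj => ?_
      have hji : j ≠ i := Finset.ne_of_mem_erase hj
      exact Submodule.mem_iSup_of_mem j (Submodule.mem_iSup_of_mem hji (ha j).1)
    have hzero : x - a i = 0 := by
      have hdisj := hind i
      exact Submodule.disjoint_def.1 hdisj _ hxai hx2
    have hxa : x = a i := by
      have := sub_eq_zero.1 hzero
      exact this
    rw [hxa]
    exact (ha i).2
  -- package everything
  refine ⟨F.toLinearMap, ⟨?_, ?_, ?_, ?_, ?_⟩, ?_⟩
  · intro c
    show F 1 c = _
    rw [map_one]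
    rfl
  · intro x y c
    show F (x * y) c = _
    rw [map_mul]
    exact Stmt14.mul_apply' (F x) (F y) c
  · intro i j hij x hx c hc
    exact hgrade i x hx j (Ne.symm hij) c hc
  · intro a c hc
    show F (eA a) c = _
    rw [hFA', f0_apply, hproj_eq 0 c hc]
  · intro m c hc
    show F (eM m) c = _
    rw [hFM', g1_apply, hproj_eq 1 c hc]
  -- uniqueness
  · rintro φ' ⟨h1', h2', h3', h4', h5'⟩
    have hφ'one : φ' 1 = (1 : C →ₗ[K] K) := LinearMap.ext h1'
    have hφ'mul : ∀ x y, φ' (x * y) = φ' x * φ' y := fun x y =>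
      LinearMap.ext fun c => (h2' x y c).trans (Stmt14.mul_apply' (φ' x) (φ' y) c).symm
    set F' : T →ₐ[K] (C →ₗ[K] K) := AlgHom.ofLinearMap φ' hφ'one hφ'mul with hF'
    have hcA : F'.comp eA = F0 := by
      apply AlgHom.ext
      intro a
      show φ' (eA a) = f0 a
      apply ext0
      intro j c hc
      rcases eq_or_ne j 0 with rfl | hj
      · rw [h4' a c hc, f0_apply, hproj_eq 0 c hc]
      · have hmem : eA a ∈ gT 0 := by rw [← heA]; exact LinearMap.mem_range_self _ a
        rw [h3' 0 j (Ne.symm hj) (eA a) hmem c hc, f0_apply, hproj_ne j 0 hj c hc, map_zero]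
    have hcM : F'.toLinearMap ∘ₗ eM = g1 := by
      apply LinearMap.ext
      intro m
      show φ' (eM m) = g1 m
      apply ext0
      intro j c hc
      rcases eq_or_ne j 1 with rfl | hj
      · rw [h5' m c hc, g1_apply, hproj_eq 1 c hc]
      · have hmem : eM m ∈ gT 1 := by rw [← heM]; exact LinearMap.mem_range_self _ m
        rw [h3' 1 j (Ne.symm hj) (eM m) hmem c hc, g1_apply, hproj_ne j 1 hj c hc, map_zero]
    have : F' = F := hFuniq F' ⟨hcA, hcM⟩
    calc φ' = F'.toLinearMap := rfl
      _ = F.toLinearMap := by rw [this]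
end

section
/- Let φ_1 : M × N → K be a left non-degenerate bilinear map of vector spaces. Then for each i ≥ 1, the bilinear map φ_1^{⊗i} : M^{⊗i} × N^{⊗i} → K defined by φ_1^{⊗i}(m^1 ⊗ ⋯ ⊗ m^i, n^1 ⊗ ⋯ ⊗ n^i) = ∏_{r=1}^i φ_1(m^r, n^r) is left non-degenerate. -/
open TensorProduct PiTensorProduct Module

variable (K : Type) [Field K]

/-!
Fix bases `e r` of the spaces `N r`; the tensors `⊗ᵣ e r (q r)` form a basis of `⨂ᵣ N r`. A nonzero
`y` has a nonzero coordinate at some `p`, and only finitely many basis vectors of each `N r` occur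
in `y`. Non-degeneracy makes the functionals `φ r (·, e r k)` for these finitely many `k` linearly
independent, so they admit a biorthogonal family `v r k`; then `⊗ᵣ v r (p r)` pairs with `y` to give
exactly the coordinate of `y` at `p`.
-/

theorem Module.Dual.exists_biorthogonal {K V ι : Type*} [Field K] [AddCommGroup V] [Module K V]
    [Finite ι] [DecidableEq ι] {f : ι → Dual K V} (hf : LinearIndependent K f) :
    ∃ v : ι → V, ∀ j k, f j (v k) = if j = k then 1 else 0 := by
  have hsurj : Function.Surjective (LinearMap.pi f) := by
    rw [← LinearMap.range_eq_top, ← Submodule.span_eq (LinearMap.range _), LinearMap.coe_range]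
    exact span_flip_eq_top_iff_linearIndependent.2
      (hf.map' (LinearMap.ltoFun K V K K) (LinearMap.ker_eq_bot.2 DFunLike.coe_injective))
  choose v hv using fun k => hsurj (Pi.single k 1)
  exact ⟨v, fun j k => by simpa [Pi.single_apply] using congr_fun (hv k) j⟩

theorem LinearMap.SeparatingRight.exists_biorthogonal {K M N κ : Type*} [Field K]
    [AddCommGroup M] [Module K M] [AddCommGroup N] [Module K N] [DecidableEq κ]
    {B : M →ₗ[K] N →ₗ[K] K} (hB : B.SeparatingRight) {e : κ → N} (he : LinearIndependent K e)
    (T : Finset κ) :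
    ∃ v : κ → M, ∀ j ∈ T, ∀ k ∈ T, B (v j) (e k) = if j = k then 1 else 0 := by
  have hf : LinearIndependent K fun k : T => B.flip (e k) :=
    (he.comp _ Subtype.val_injective).map' B.flip (separatingRight_iff_flip_ker_eq_bot.1 hB)
  obtain ⟨w, hw⟩ := Dual.exists_biorthogonal hf
  refine ⟨fun j => if h : j ∈ T then w ⟨j, h⟩ else 0, fun j hj k hk => ?_⟩
  simpa [hj, eq_comm] using hw ⟨k, hk⟩ ⟨j, hj⟩

namespace PiTensorProduct

variable {K ι : Type*} [Field K] [Fintype ι] {M N : ι → Type*}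
  [∀ r, AddCommGroup (M r)] [∀ r, Module K (M r)] [∀ r, AddCommGroup (N r)] [∀ r, Module K (N r)]

noncomputable def pairing (φ : ∀ r, M r →ₗ[K] N r →ₗ[K] K) :
    (⨂[K] r, M r) →ₗ[K] (⨂[K] r, N r) →ₗ[K] K :=
  (map₂ φ).compr₂ (lift (MultilinearMap.mkPiAlgebra K ι K))

theorem pairing_tprod_tprod (φ : ∀ r, M r →ₗ[K] N r →ₗ[K] K) (m : ∀ r, M r) (n : ∀ r, N r) :
    pairing φ (tprod K m) (tprod K n) = ∏ r, φ r (m r) (n r) := by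
  simp [pairing, map₂_tprod_tprod]

theorem separatingRight_of_tprod_tprod {φ : ∀ r, M r →ₗ[K] N r →ₗ[K] K}
    (hφ : ∀ r, (φ r).SeparatingRight) (Φ : (⨂[K] r, M r) →ₗ[K] (⨂[K] r, N r) →ₗ[K] K)
    (hΦ : ∀ m n, Φ (tprod K m) (tprod K n) = ∏ r, φ r (m r) (n r)) :
    Φ.SeparatingRight := by
  classical
  intro y hy
  by_contra hy0
  let e r := Basis.ofVectorSpace K (N r)
  let b := Basis.piTensorProduct e
  set S := (b.repr y).support
  obtain ⟨p, hpS⟩ : S.Nonempty := Finsupp.support_nonempty_iff.2 (b.repr.map_ne_zero_iff.2 hy0)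
  choose v hv using fun r => (hφ r).exists_biorthogonal (e r).linearIndependent (S.image (· r))
  set x := tprod K fun r => v r (p r)
  have hdual : ∀ q ∈ S, Φ x (b q) = if p = q then 1 else 0 := by
    intro q hq
    simp only [x, b, Basis.piTensorProduct_apply, hΦ]
    rw [Finset.prod_congr rfl fun r _ =>
      hv r _ (Finset.mem_image_of_mem _ hpS) _ (Finset.mem_image_of_mem _ hq)]
    simp [Finset.prod_boole, funext_iff]
  have hxy : Φ x y = b.repr y p := by
    conv_lhs => rw [← b.linearCombination_repr y]
    rw [Finsupp.apply_linearCombination, Finsupp.linearCombination_apply, Finsupp.sum,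
      Finset.sum_eq_single_of_mem p hpS fun q hq hqp => by simp [hdual q hq, Ne.symm hqp]]
    simp [hdual p hpS]
  exact Finsupp.mem_support_iff.1 hpS (hxy ▸ hy x)

end PiTensorProduct

theorem tensor_power_pairing_nondeg (M N : Type)
    [AddCommGroup M] [Module K M] [AddCommGroup N] [Module K N]
    (φ1 : M →ₗ[K] N →ₗ[K] K)
    (hnd : ∀ y : N, y ≠ 0 → ∃ x : M, φ1 x y ≠ 0)
    (i : ℕ) :
    (∃ Φ : (⨂[K] (_ : Fin i), M) →ₗ[K] (⨂[K] (_ : Fin i), N) →ₗ[K] K,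
      ∀ (m : Fin i → M) (n : Fin i → N),
        Φ (PiTensorProduct.tprod K m) (PiTensorProduct.tprod K n)
          = ∏ r : Fin i, φ1 (m r) (n r)) ∧
    (∀ Φ : (⨂[K] (_ : Fin i), M) →ₗ[K] (⨂[K] (_ : Fin i), N) →ₗ[K] K,
      (∀ (m : Fin i → M) (n : Fin i → N),
        Φ (PiTensorProduct.tprod K m) (PiTensorProduct.tprod K n)
          = ∏ r : Fin i, φ1 (m r) (n r)) →
      ∀ y : ⨂[K] (_ : Fin i), N, y ≠ 0 → ∃ x : ⨂[K] (_ : Fin i), M, Φ x y ≠ 0) := by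
  have hφ1 : φ1.SeparatingRight := fun y hy => by
    by_contra hy0
    obtain ⟨x, hx⟩ := hnd y hy0
    exact hx (hy x)
  refine ⟨⟨pairing fun _ => φ1, pairing_tprod_tprod _⟩, fun Φ hΦ y hy0 => ?_⟩
  by_contra! hy
  exact hy0 (separatingRight_of_tprod_tprod (fun _ => hφ1) Φ hΦ y hy)
end
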